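/- Let H be a cocommutative bialgebra over R and M a commutative R-algebra. Then the universal algebra H(M) carries a natural action of H as a bialgebra (i.e., H acts by measuring: h(ab) = Σ h'(a)h''(b), h(1) = η(h)1), determined by h₁(h₂(m)) = (h₁h₂)(m) for h₁,h₂ ∈ H, m ∈ M. -/

import Mathlib

/-!
Measurings `H ⊗ M → B` are the same as algebra maps `M → Hom(H, B)` into the convolution
algebra, which is commutative because `H` is cocommutative. The measuring
`(h, m) ↦ (k ↦ φ (k * h) m)` into `Hom(H, A)` therefore induces, by universality, an algebra map
`f : A → Hom(H, A)`, and `ρ h a := f a h` measures `A`. The identities `ρ 1 = id` and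
`ρ (h₁ * h₂) = ρ h₁ ∘ ρ h₂` are equalities of algebra maps out of `A` (into `A` by evaluation at
the group-like element `1`, resp. into `Hom(H, Hom(H, A))`), so they only need to be checked on the
generators `φ h m`, where they reduce to `1 * h = h` and associativity in `H`.
-/
open TensorProduct Coalgebra

/-- A bundled commutative algebra over `R`. -/
structure CommAlgebraOver (R : Type) [CommRing R] : Type 1 where
  carrier : Type
  [commRing : CommRing carrier]
  [algebra : Algebra R carrier]

attribute [instance] CommAlgebraOver.commRing CommAlgebraOver.algebra

/-- The map `φ : H ⊗ M → A`, `(h, m) ↦ h(m)`, satisfies `h(mn) = Σ h'(m)h''(n)`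
and `h(1) = η(h)·1`. -/
def Measures (R H M A : Type) [CommRing R] [AddCommGroup H] [Module R H]
    [Coalgebra R H] [CommRing M] [Algebra R M] [CommRing A] [Algebra R A]
    (φ : H →ₗ[R] M →ₗ[R] A) : Prop :=
  (∀ h : H, φ h 1 = algebraMap R A (counit (R := R) h)) ∧
  (∀ (h : H) (m n : M) (ι : Type) (t : Finset ι) (h₁ h₂ : ι → H),
    comul (R := R) h = ∑ i ∈ t, h₁ i ⊗ₜ[R] h₂ i →
    φ h (m * n) = ∑ i ∈ t, φ (h₁ i) m * φ (h₂ i) n)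

open WithConv

def IsUniversalMeasuring (R H M A : Type) [CommRing R] [AddCommGroup H] [Module R H]
    [Coalgebra R H] [CommRing M] [Algebra R M] [CommRing A] [Algebra R A]
    (φ : H →ₗ[R] M →ₗ[R] A) : Prop :=
  ∀ (B : CommAlgebraOver R) (ψ : H →ₗ[R] M →ₗ[R] B.carrier),
    Measures R H M B.carrier ψ → ∃! f : A →ₐ[R] B.carrier, ∀ (h : H) (m : M), f (φ h m) = ψ h m

section Measures

variable {R H M A B : Type} [CommRing R] [AddCommGroup H] [Module R H] [Coalgebra R H]
  [CommRing M] [Algebra R M] [CommRing A] [Algebra R A] [CommRing B] [Algebra R B]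
  {φ : H →ₗ[R] M →ₗ[R] A}

theorem Measures.compr₂_algHom (hφ : Measures R H M A φ) (g : A →ₐ[R] B) :
    Measures R H M B (φ.compr₂ g.toLinearMap) := by
  refine ⟨fun h => ?_, fun h m n ι t h₁ h₂ hrep => ?_⟩
  · simp [hφ.1 h]
  · simp [hφ.2 h m n ι t h₁ h₂ hrep]

theorem IsUniversalMeasuring.algHom_ext (huniv : IsUniversalMeasuring R H M A φ)
    (hφ : Measures R H M A φ) {g₁ g₂ : A →ₐ[R] B} (hg : ∀ h m, g₁ (φ h m) = g₂ (φ h m)) :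
    g₁ = g₂ :=
  (huniv ⟨B⟩ _ (hφ.compr₂_algHom g₂)).unique hg fun _ _ => rfl

noncomputable def Measures.toConvAlgHom (hφ : Measures R H M A φ) :
    M →ₐ[R] WithConv (H →ₗ[R] A) where
  toFun m := toConv (φ.flip m)
  map_one' := by ext h; simp [hφ.1 h]
  map_mul' m n := by
    ext h
    rw [(ℛ R h).convMul_apply]
    exact hφ.2 h m n _ _ _ _ (ℛ R h).eq.symm
  map_zero' := by ext; simp
  map_add' m n := by ext; simp
  commutes' r := by ext h; simp [Algebra.algebraMap_eq_smul_one, hφ.1 h]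

noncomputable def AlgHom.convFlip (f : A →ₐ[R] WithConv (H →ₗ[R] B)) : H →ₗ[R] A →ₗ[R] B :=
  ((WithConv.linearEquiv R (H →ₗ[R] B)).toLinearMap ∘ₗ f.toLinearMap).flip

@[simp]
theorem AlgHom.convFlip_apply (f : A →ₐ[R] WithConv (H →ₗ[R] B)) (h : H) (a : A) :
    f.convFlip h a = f a h :=
  rfl

theorem AlgHom.measures_convFlip (f : A →ₐ[R] WithConv (H →ₗ[R] B)) :
    Measures R H A B f.convFlip := by
  refine ⟨fun h => ?_, fun h a b ι t h₁ h₂ hrep => ?_⟩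
  · simp
  · rw [AlgHom.convFlip_apply, map_mul, Coalgebra.Repr.convMul_apply ⟨t, h₁, h₂, hrep.symm⟩]
    rfl

end Measures

section Convolution

variable {R C A B : Type*} [CommSemiring R] [Semiring A] [Algebra R A] [Semiring B] [Algebra R B]

section Coalgebra

variable [AddCommMonoid C] [Module R C] [Coalgebra R C]

noncomputable def AlgHom.convCompLeft (g : A →ₐ[R] B) :
    WithConv (C →ₗ[R] A) →ₐ[R] WithConv (C →ₗ[R] B) where
  toFun u := toConv (g.toLinearMap ∘ₗ u.ofConv)
  map_one' := by ext; simp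
  map_mul' u v := by ext c; exact congr($(LinearMap.algHom_comp_convMul_distrib g u v) c)
  map_zero' := by ext; simp
  map_add' u v := by ext; simp
  commutes' r := by ext; simp

@[simp]
theorem AlgHom.convCompLeft_apply (g : A →ₐ[R] B) (u : WithConv (C →ₗ[R] A)) (c : C) :
    g.convCompLeft u c = g (u c) :=
  rfl

noncomputable def IsGroupLikeElem.convEval {c : C} (hc : IsGroupLikeElem R c) :
    WithConv (C →ₗ[R] A) →ₐ[R] A where
  toFun u := u c
  map_one' := by simp [hc.counit_eq_one]
  map_mul' u v := by simp [hc.comul_eq_tmul_self]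
  map_zero' := rfl
  map_add' _ _ := rfl
  commutes' r := by simp [hc.counit_eq_one, Algebra.algebraMap_eq_smul_one]

@[simp]
theorem IsGroupLikeElem.convEval_apply {c : C} (hc : IsGroupLikeElem R c)
    (u : WithConv (C →ₗ[R] A)) : hc.convEval u = u c :=
  rfl

end Coalgebra

variable [Semiring C] [Bialgebra R C]

noncomputable def Bialgebra.convCompMulRight :
    WithConv (C →ₗ[R] A) →ₐ[R] WithConv (C →ₗ[R] WithConv (C →ₗ[R] A)) where
  toFun u := toConv ((WithConv.linearEquiv R (C →ₗ[R] A)).symm.toLinearMap ∘ₗ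
    (LinearMap.mul R C).flip.compr₂ u.ofConv)
  map_one' := by
    ext k₂ k₁
    simp [Algebra.smul_def, ← map_mul, mul_comm]
  map_mul' u v := by
    ext k₂ k₁
    change (u * v) (k₁ * k₂) = ((_ * _ : WithConv (C →ₗ[R] WithConv (C →ₗ[R] A))) k₂) k₁
    rw [((ℛ R k₁).mul (ℛ R k₂)).convMul_apply, (ℛ R k₂).convMul_apply]
    simp [(ℛ R k₁).convMul_apply, Finset.sum_product, Finset.sum_comm (s := (ℛ R k₁).index)]
  map_zero' := by ext; simp
  map_add' u v := by ext; simp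
  commutes' r := by ext; simp [Algebra.smul_def, ← map_mul, mul_left_comm, mul_comm]

@[simp]
theorem Bialgebra.convCompMulRight_apply (u : WithConv (C →ₗ[R] A)) (k₁ k₂ : C) :
    convCompMulRight u k₂ k₁ = u (k₁ * k₂) :=
  rfl

end Convolution

/-- If `H` is a cocommutative bialgebra and `M` a commutative `R`-algebra, then
the universal measuring algebra `H(M)` carries a natural `H`-action by measuring,
determined by `h₁(h₂(m)) = (h₁h₂)(m)`. -/
theorem universal_measuring_algebra_H_action (R H M A : Type) [CommRing R]
    [Ring H] [Bialgebra R H]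
    (hcoc : ∀ h : H, TensorProduct.comm R H H (comul (R := R) h) = comul (R := R) h)
    [CommRing M] [Algebra R M] [CommRing A] [Algebra R A]
    (φ : H →ₗ[R] M →ₗ[R] A) (hφ : Measures R H M A φ)
    (huniv : ∀ (B : CommAlgebraOver R) (ψ : H →ₗ[R] M →ₗ[R] B.carrier),
      Measures R H M B.carrier ψ →
      ∃! f : A →ₐ[R] B.carrier, ∀ (h : H) (m : M), f (φ h m) = ψ h m) :
    ∃ ρ : H →ₗ[R] A →ₗ[R] A,
      -- `H` measures `H(M)`
      (∀ h : H, ρ h 1 = algebraMap R A (counit (R := R) h)) ∧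
      (∀ (h : H) (a b : A) (ι : Type) (t : Finset ι) (h₁ h₂ : ι → H),
        comul (R := R) h = ∑ i ∈ t, h₁ i ⊗ₜ[R] h₂ i →
        ρ h (a * b) = ∑ i ∈ t, ρ (h₁ i) a * ρ (h₂ i) b) ∧
      -- `ρ` is an action of the algebra `H`
      (∀ (h₁ h₂ : H) (a : A), ρ (h₁ * h₂) a = ρ h₁ (ρ h₂ a)) ∧
      (∀ a : A, ρ 1 a = a) ∧
      -- the action is determined by `h₁(h₂(m)) = (h₁h₂)(m)`
      (∀ (h₁ h₂ : H) (m : M), ρ h₁ (φ h₂ m) = φ (h₁ * h₂) m) := by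
  have : IsCocomm R H := ⟨LinearMap.ext hcoc⟩
  obtain ⟨f, hf, -⟩ := huniv ⟨WithConv (H →ₗ[R] A)⟩ _
    (Bialgebra.convCompMulRight.comp hφ.toConvAlgHom).measures_convFlip
  have hf' (h : H) (m : M) (k : H) : f (φ h m) k = φ (k * h) m := congr($(hf h m) k)
  have hunit : (IsGroupLikeElem.one (R := R) (A := H)).convEval.comp f = AlgHom.id R A :=
    IsUniversalMeasuring.algHom_ext huniv hφ fun h m => by simp [hf']
  have hassoc : Bialgebra.convCompMulRight.comp f = f.convCompLeft.comp f :=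
    IsUniversalMeasuring.algHom_ext huniv hφ fun h m => by ext k₂ k₁; simp [hf', mul_assoc]
  refine ⟨f.convFlip, f.measures_convFlip.1, f.measures_convFlip.2, fun h₁ h₂ a => ?_,
    fun a => congr($hunit a), fun h₁ h₂ m => hf' h₂ m h₁⟩
  exact congr($hassoc a h₂ h₁)
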